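/- arXiv:1006.2808 — 4 statements merged into one kernel-verified Lean document; each statement's English description precedes it below -/
import Mathlib

section
/- Let Λ be a positive differentiable function on [b₀,∞) with derivative λ satisfying λ(x)/Λ(x) ≤ β₀/x for β₀ ∈ (0,1), and fix a constant a* > 0. Set α = (1−β₀)/2. Then there exists b₁ ≥ b₀ such that for all x > b₁, Λ(x) − Λ(x − x^α) ≤ a*. Equivalently, x − Λ^{-1}(Λ(x) − a*) ≥ x^{(1−β₀)/2} for all sufficiently large x. -/
open Real Filter

/-!
The bound `∂ log Λ ≤ β / x` makes `log Λ x - β log x` antitone, so `Λ x ≤ K x ^ β` with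
`K = Λ b₀ / b₀ ^ β`, and hence `Λ' x ≤ β K x ^ (β - 1)`. By the mean value theorem the increment
of `Λ` over `[x - x ^ α, x]` is then at most of order `x ^ (β - 1 + α) = x ^ (-(1 - β) / 2)`,
which tends to `0`.
-/

section LogDerivBound

variable {Λ lam : ℝ → ℝ} {a β : ℝ}

theorem antitoneOn_log_sub_mul_log (ha : 0 < a) (hpos : ∀ x ≥ a, 0 < Λ x)
    (hderiv : ∀ x ≥ a, HasDerivAt Λ (lam x) x) (hB : ∀ x ≥ a, lam x / Λ x ≤ β / x) :
    AntitoneOn (fun x => log (Λ x) - β * log x) (Set.Ici a) := by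
  have hd : ∀ x ≥ a, HasDerivAt (fun x => log (Λ x) - β * log x) (lam x / Λ x - β / x) x :=
    fun x hx => by
      simpa [div_eq_mul_inv, Pi.sub_def] using ((hderiv x hx).log (hpos x hx).ne').sub
        ((hasDerivAt_log (ha.trans_le hx).ne').const_mul β)
  refine antitoneOn_of_hasDerivWithinAt_nonpos (f' := fun x => lam x / Λ x - β / x) (convex_Ici a)
    (fun x hx => (hd x hx).continuousAt.continuousWithinAt) (fun x hx => ?_) (fun x hx => ?_)
  all_goals rw [interior_Ici] at hx
  · exact (hd x hx.le).hasDerivWithinAt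
  · exact sub_nonpos.2 (hB x hx.le)

theorem le_div_rpow_mul_rpow_of_logDeriv_le (ha : 0 < a) (hpos : ∀ x ≥ a, 0 < Λ x)
    (hderiv : ∀ x ≥ a, HasDerivAt Λ (lam x) x) (hB : ∀ x ≥ a, lam x / Λ x ≤ β / x)
    {x : ℝ} (hx : a ≤ x) : Λ x ≤ Λ a / a ^ β * x ^ β := by
  have hx0 : 0 < x := ha.trans_le hx
  have hlog := antitoneOn_log_sub_mul_log ha hpos hderiv hB Set.self_mem_Ici hx hx
  have hΛa := hpos a le_rfl
  rw [← log_le_log_iff (hpos x hx) (by positivity), log_mul (by positivity) (by positivity),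
    log_div hΛa.ne' (by positivity), log_rpow ha, log_rpow hx0]
  linarith

theorem le_mul_rpow_sub_one_of_logDeriv_le (ha : 0 < a) (hβ : 0 ≤ β)
    (hpos : ∀ x ≥ a, 0 < Λ x) (hderiv : ∀ x ≥ a, HasDerivAt Λ (lam x) x)
    (hB : ∀ x ≥ a, lam x / Λ x ≤ β / x) {x : ℝ} (hx : a ≤ x) :
    lam x ≤ β * (Λ a / a ^ β) * x ^ (β - 1) := by
  have hx0 : 0 < x := ha.trans_le hx
  calc lam x ≤ β * Λ x / x := by
        have := hB x hx
        rwa [div_le_div_iff₀ (hpos x hx) hx0, ← le_div_iff₀ hx0] at this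
    _ ≤ β * (Λ a / a ^ β * x ^ β) / x := by
        gcongr; exact le_div_rpow_mul_rpow_of_logDeriv_le ha hpos hderiv hB hx
    _ = β * (Λ a / a ^ β) * x ^ (β - 1) := by rw [rpow_sub_one hx0.ne']; ring

theorem sub_le_of_logDeriv_le (ha : 0 < a) (hβ₀ : 0 ≤ β) (hβ₁ : β ≤ 1)
    (hpos : ∀ x ≥ a, 0 < Λ x) (hderiv : ∀ x ≥ a, HasDerivAt Λ (lam x) x)
    (hB : ∀ x ≥ a, lam x / Λ x ≤ β / x) {x h : ℝ} (hh : 0 ≤ h) (hxh : a ≤ x - h) :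
    Λ x - Λ (x - h) ≤ β * (Λ a / a ^ β) * ((x - h) ^ (β - 1) * h) := by
  set C := β * (Λ a / a ^ β)
  have hC : 0 ≤ C := by have := hpos a le_rfl; positivity
  have hmem : ∀ y ∈ Set.Icc (x - h) x, a ≤ y := fun y hy => hxh.trans hy.1
  have hderiv_le : ∀ y ∈ interior (Set.Icc (x - h) x), deriv Λ y ≤ C * (x - h) ^ (β - 1) := by
    intro y hy
    rw [interior_Icc] at hy
    have hay := hmem y (Set.Ioo_subset_Icc_self hy)
    rw [(hderiv y hay).deriv]
    calc lam y ≤ C * y ^ (β - 1) := le_mul_rpow_sub_one_of_logDeriv_le ha hβ₀ hpos hderiv hB hay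
      _ ≤ C * (x - h) ^ (β - 1) := mul_le_mul_of_nonneg_left
          (rpow_le_rpow_of_nonpos (ha.trans_le hxh) hy.1.le (by linarith)) hC
  have key := (convex_Icc (x - h) x).image_sub_le_mul_sub_of_deriv_le
    (fun y hy => (hderiv y (hmem y hy)).continuousAt.continuousWithinAt)
    (fun y hy => (hderiv y (hmem y (interior_subset hy))).differentiableAt.differentiableWithinAt)
    hderiv_le (x - h) ⟨le_rfl, by linarith⟩ x ⟨by linarith, le_rfl⟩ (by linarith)
  rwa [sub_sub_cancel, mul_assoc] at key

end LogDerivBound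

theorem eventually_rpow_le_half_self {α : ℝ} (hα : α < 1) :
    ∀ᶠ x : ℝ in atTop, x ^ α ≤ x / 2 := by
  have hsmall := (tendsto_rpow_neg_atTop (by linarith : 0 < 1 - α)).eventually_le_const
    (by norm_num : (0 : ℝ) < 1 / 2)
  filter_upwards [hsmall, eventually_gt_atTop 0] with x hx hx0
  calc x ^ α = x ^ (-(1 - α)) * x := by rw [← rpow_add_one hx0.ne']; ring_nf
    _ ≤ 1 / 2 * x := by gcongr
    _ = x / 2 := by ring

theorem tendsto_sub_rpow_rpow_mul_rpow_atTop {α γ : ℝ} (hα : α < 1) (hγ : γ ≤ 0)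
    (hαγ : α + γ < 0) :
    Tendsto (fun x : ℝ => (x - x ^ α) ^ γ * x ^ α) atTop (nhds 0) := by
  have hupper : Tendsto (fun x : ℝ => x ^ (α + γ) / 2 ^ γ) atTop (nhds 0) := by
    simpa using (tendsto_rpow_neg_atTop (by linarith : 0 < -(α + γ))).div_const (2 ^ γ)
  refine tendsto_of_tendsto_of_tendsto_of_le_of_le' tendsto_const_nhds hupper ?_ ?_
  all_goals filter_upwards [eventually_rpow_le_half_self hα, eventually_gt_atTop 0] with x hhalf hx0
  · have : 0 < x - x ^ α := by linarith
    positivity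
  · calc (x - x ^ α) ^ γ * x ^ α ≤ (x / 2) ^ γ * x ^ α := by
          gcongr ?_ * _
          exact rpow_le_rpow_of_nonpos (by positivity) (by linarith) hγ
      _ = x ^ (α + γ) / 2 ^ γ := by
          rw [div_rpow hx0.le (by norm_num), rpow_add hx0]; ring

theorem stmt2_general (b₀ β₀ astar : ℝ) (hb₀ : 0 < b₀) (hβ₀ : β₀ ∈ Set.Ioo (0:ℝ) 1)
    (hastar : 0 < astar)
    (Λ lam : ℝ → ℝ) (hΛpos : ∀ x ≥ b₀, 0 < Λ x)
    (hderiv : ∀ x ≥ b₀, HasDerivAt Λ (lam x) x)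
    (hB2 : ∀ x ≥ b₀, lam x / Λ x ≤ β₀ / x) :
    ∃ b₁ ≥ b₀, ∀ x > b₁, Λ x - Λ (x - x ^ ((1 - β₀) / 2)) ≤ astar := by
  obtain ⟨hβ0, hβ1⟩ := hβ₀
  have hlim := (tendsto_sub_rpow_rpow_mul_rpow_atTop (α := (1 - β₀) / 2) (γ := β₀ - 1)
    (by linarith) (by linarith) (by linarith)).const_mul (β₀ * (Λ b₀ / b₀ ^ β₀))
  rw [mul_zero] at hlim
  obtain ⟨b, hb⟩ := ((hlim.eventually_le_const hastar).and
    ((eventually_rpow_le_half_self (by linarith : (1 - β₀) / 2 < 1)).and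
      (eventually_ge_atTop (2 * b₀)))).exists_forall_of_atTop
  refine ⟨max b b₀, le_max_right _ _, fun x hx => ?_⟩
  obtain ⟨hsmall, hhalf, hx2⟩ := hb x ((le_max_left _ _).trans hx.le)
  have hx0 : 0 < x := by linarith
  exact (sub_le_of_logDeriv_le hb₀ hβ0.le hβ1.le hΛpos hderiv hB2 (by positivity)
    (by linarith)).trans hsmall

/-- Overshoot lemma: under Assumption B2, for `α = (1-β₀)/2`, eventually
`Λ x - Λ (x - x^α) ≤ a*`, i.e. `x - Λ⁻¹(Λ x - a*) ≥ x^{(1-β₀)/2}`. -/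
theorem stmt2 (b₀ β₀ astar : ℝ) (hb₀ : 0 < b₀) (hβ₀ : β₀ ∈ Set.Ioo (0:ℝ) 1)
    (hastar : 0 < astar)
    (Λ lam : ℝ → ℝ) (hΛpos : ∀ x ≥ b₀, 0 < Λ x)
    (hmono : StrictMonoOn Λ (Set.Ici b₀))
    (hderiv : ∀ x ≥ b₀, HasDerivAt Λ (lam x) x)
    (hB2 : ∀ x ≥ b₀, lam x / Λ x ≤ β₀ / x) :
    ∃ b₁ ≥ b₀, ∀ x > b₁, Λ x - Λ (x - x ^ ((1 - β₀) / 2)) ≤ astar :=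
  stmt2_general b₀ β₀ astar hb₀ hβ₀ hastar Λ lam hΛpos hderiv hB2
end

section
/- Let X be a random variable with finite negative mean μ < 0, a subexponential (heavy) tail, and let S_n be the associated random walk with S₀ = 0 and τ_b = inf{n ≥ 1 : S_n > b}. If X is regularly varying with tail index ι ∈ (1,2), then E[τ_b | τ_b < ∞] = ∞, i.e. the conditional expected first passage time given ruin is infinite. -/
open MeasureTheory ProbabilityTheory Filter
open scoped ENNReal

open Topology

/-!
By the strong law of large numbers the walk drifts to `-∞` at linear speed, so with positive
probability `p` it stays forever between the lines `S n ≤ 0` and `S n ≥ 2 μ n - A`. On that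
event, a single jump `X (m + 1) > b + A - 2 μ m` produces ruin exactly at time `m + 1`, and this
jump is independent of the past; hence `E[τ; τ < ∞] ≥ p ∑ (m + 1) P(X > b + A - 2 μ m)`.
As the tail of `X` is regularly varying of index `-ι > -2`, it loses at most a factor `4` when its
argument doubles, and then the series diverges block by dyadic block.
-/

lemma exists_forall_le_mul_add_of_tendsto_div {u : ℕ → ℝ} {a c : ℝ}
    (hu : Tendsto (fun n => u n / n) atTop (𝓝 a)) (hac : a < c) :
    ∃ M : ℕ, ∀ n, u n ≤ c * n + M := by
  have hev : ∀ᶠ n : ℕ in atTop, u n - c * n ≤ 0 := by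
    filter_upwards [hu.eventually (gt_mem_nhds hac), eventually_gt_atTop 0] with n hn hn0
    rw [div_lt_iff₀ (by positivity)] at hn
    linarith
  obtain ⟨B, hB⟩ := (isBoundedUnder_of_eventually_le hev).bddAbove_range
  obtain ⟨M, hM⟩ := exists_nat_ge B
  exact ⟨M, fun n => by linarith [hB ⟨n, rfl⟩]⟩

lemma eventually_measure_Ioi_le_four_mul {ν : Measure ℝ} [IsFiniteMeasure ν]
    (hpos : ∀ x, 0 < (ν (Set.Ioi x)).toReal) {ι : ℝ} (hι : ι < 2)
    (h : Tendsto (fun x => (ν (Set.Ioi (2 * x))).toReal / (ν (Set.Ioi x)).toReal) atTop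
      (𝓝 ((2 : ℝ) ^ (-ι)))) :
    ∀ᶠ x in atTop, ν (Set.Ioi x) ≤ 4 * ν (Set.Ioi (2 * x)) := by
  have hquarter : (1 / 4 : ℝ) < 2 ^ (-ι) :=
    calc (1 / 4 : ℝ) = 2 ^ (-2 : ℝ) := by norm_num [Real.rpow_neg]
      _ < 2 ^ (-ι) := Real.rpow_lt_rpow_of_exponent_lt (by norm_num) (by linarith)
  filter_upwards [h.eventually (lt_mem_nhds hquarter)] with x hx
  rw [lt_div_iff₀ (hpos x)] at hx
  rw [← ENNReal.toReal_le_toReal (measure_ne_top _ _) (by finiteness), ENNReal.toReal_mul,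
    ENNReal.toReal_ofNat]
  linarith

lemma tsum_sum_Ico_two_pow_le (t : ℕ → ℝ≥0∞) :
    ∑' k, ∑ m ∈ Finset.Ico (2 ^ k) (2 ^ (k + 1)), t m ≤ ∑' m, t m := by
  refine ENNReal.tsum_le_of_sum_range_le fun n => ?_
  have hblocks : ∑ k ∈ Finset.range n, ∑ m ∈ Finset.Ico (2 ^ k) (2 ^ (k + 1)), t m
      = ∑ m ∈ Finset.Ico 1 (2 ^ n), t m := by
    induction n with
    | zero => simp
    | succ n ih =>
      rw [Finset.sum_range_succ, ih, Finset.sum_Ico_consecutive _ Nat.one_le_two_pow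
        (Nat.pow_le_pow_right two_pos n.le_succ)]
  exact hblocks ▸ ENNReal.sum_le_tsum _

/-- The doubling bound makes `a k = 4 ^ k f (c 2 ^ (k + 2))` eventually nondecreasing, and the
`k`-th dyadic block of the series dominates `a k`. -/
lemma tsum_add_one_mul_eq_top_of_le_four_mul {f : ℝ → ℝ≥0∞} (hf : Antitone f)
    (hf0 : ∀ x, f x ≠ 0) (hdouble : ∀ᶠ x in atTop, f x ≤ 4 * f (2 * x)) {c : ℝ} (hc : 0 < c)
    (d : ℝ) : ∑' m : ℕ, ((m : ℝ≥0∞) + 1) * f (d + c * m) = ⊤ := by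
  set t : ℕ → ℝ≥0∞ := fun m => ((m : ℝ≥0∞) + 1) * f (d + c * m)
  set a : ℕ → ℝ≥0∞ := fun k => 4 ^ k * f (c * 2 ^ (k + 2))
  have hgrow : ∀ j, Tendsto (fun k : ℕ => c * 2 ^ (k + j)) atTop atTop := fun j =>
    ((tendsto_pow_atTop_atTop_of_one_lt one_lt_two).comp
      (tendsto_add_atTop_nat j)).const_mul_atTop hc
  obtain ⟨k₀, hk₀⟩ := (((hgrow 2).eventually hdouble).and
    ((hgrow 1).eventually_ge_atTop d)).exists_forall_of_atTop
  have ha_succ : ∀ k ≥ k₀, a k ≤ a (k + 1) := fun k hk =>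
    calc a k ≤ 4 ^ k * (4 * f (2 * (c * 2 ^ (k + 2)))) := by
          simp only [a]; gcongr; exact (hk₀ k hk).1
      _ = a (k + 1) := by simp only [a]; ring_nf
  have ha_mono : ∀ j, a k₀ ≤ a (k₀ + j) := by
    intro j
    induction j with
    | zero => rfl
    | succ j ih => exact ih.trans (ha_succ _ (Nat.le_add_right _ _))
  have hblock : ∀ k ≥ k₀, a k ≤ ∑ m ∈ Finset.Ico (2 ^ k) (2 ^ (k + 1)), t m := by
    intro k hk
    have hterm : ∀ m ∈ Finset.Ico (2 ^ k) (2 ^ (k + 1)), 2 ^ k * f (c * 2 ^ (k + 2)) ≤ t m := by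
      intro m hm
      rw [Finset.mem_Ico] at hm
      simp only [t]
      gcongr
      · calc (2 : ℝ≥0∞) ^ k = ((2 ^ k : ℕ) : ℝ≥0∞) := by push_cast; rfl
          _ ≤ m := by exact_mod_cast hm.1
          _ ≤ m + 1 := le_self_add
      · apply hf
        have hm' : (m : ℝ) ≤ 2 ^ (k + 1) := by exact_mod_cast hm.2.le
        have hd := (hk₀ k hk).2
        rw [pow_succ] at hm' hd
        rw [pow_succ, pow_succ]
        nlinarith
    calc a k = ∑ _m ∈ Finset.Ico (2 ^ k) (2 ^ (k + 1)), 2 ^ k * f (c * 2 ^ (k + 2)) := by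
          rw [Finset.sum_const, Nat.card_Ico, pow_succ, Nat.mul_two, Nat.add_sub_cancel,
            nsmul_eq_mul, ← mul_assoc]
          simp only [a]
          norm_num [← mul_pow]
      _ ≤ _ := Finset.sum_le_sum hterm
  refine top_unique ?_
  calc (⊤ : ℝ≥0∞) = ∑' _ : ℕ, a k₀ :=
        (ENNReal.tsum_const_eq_top_of_ne_zero (mul_ne_zero (by simp) (hf0 _))).symm
    _ ≤ ∑' j, ∑ m ∈ Finset.Ico (2 ^ (k₀ + j)) (2 ^ (k₀ + j + 1)), t m :=
        ENNReal.tsum_le_tsum fun j => (ha_mono j).trans (hblock _ (Nat.le_add_right _ _))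
    _ ≤ ∑' k, ∑ m ∈ Finset.Ico (2 ^ k) (2 ^ (k + 1)), t m :=
        ENNReal.tsum_comp_le_tsum_of_injective (add_right_injective k₀)
          (fun k => ∑ m ∈ Finset.Ico (2 ^ k) (2 ^ (k + 1)), t m)
    _ ≤ _ := tsum_sum_Ico_two_pow_le t

lemma sum_range_nonpos_of_initial_drop {x : ℕ → ℝ} {δ M : ℝ} {N : ℕ} (hδ : 0 ≤ δ)
    (hN : M ≤ N * δ) (hhead : ∀ i < N, x i ≤ -δ) (htail : ∀ j, ∑ i ∈ Finset.range j, x (N + i) ≤ M)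
    (n : ℕ) : ∑ i ∈ Finset.range n, x i ≤ 0 := by
  have hdrop : ∀ n ≤ N, ∑ i ∈ Finset.range n, x i ≤ -(n * δ) := fun n hn =>
    calc ∑ i ∈ Finset.range n, x i ≤ ∑ _i ∈ Finset.range n, -δ :=
          Finset.sum_le_sum fun i hi => hhead i (by rw [Finset.mem_range] at hi; omega)
      _ = -(n * δ) := by simp
  rcases le_or_gt n N with h | h
  · linarith [hdrop n h, mul_nonneg n.cast_nonneg hδ]
  · obtain ⟨j, rfl⟩ := Nat.exists_eq_add_of_le h.le
    rw [Finset.sum_range_add]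
    linarith [hdrop N le_rfl, htail j]

lemma iInf_firstPassage_eq {s : ℕ → ℝ} {b : ℝ} {m : ℕ} (hle : ∀ n ≤ m, s n ≤ b)
    (hlt : b < s (m + 1)) : ⨅ (n : ℕ) (_ : 1 ≤ n ∧ b < s n), (n : ℕ∞) = m + 1 := by
  refine le_antisymm ((iInf₂_le (m + 1) ⟨by omega, hlt⟩).trans (by push_cast; rfl)) ?_
  refine le_iInf₂ fun n hn => ?_
  have : m + 1 ≤ n := by
    by_contra! h
    exact hn.2.not_ge (hle n (by omega))
  exact_mod_cast this

lemma exists_measure_Iic_neg_ne_zero {ν : Measure ℝ} (hneg : ∫ x, x ∂ν < 0) :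
    ∃ δ > 0, ν (Set.Iic (-δ)) ≠ 0 := by
  by_contra! h
  have hnull : ν (Set.Iio 0) = 0 := by
    refine measure_mono_null (fun x (hx : x < 0) => ?_)
      (measure_iUnion_null fun n : ℕ => h (1 / (n + 1)) (by positivity))
    obtain ⟨n, hn⟩ := exists_nat_one_div_lt (neg_pos.2 hx)
    exact Set.mem_iUnion.2 ⟨n, by simp only [Set.mem_Iic]; linarith⟩
  have : 0 ≤ ∫ x, x ∂ν := integral_nonneg_of_ae (by
    rw [EventuallyLE, ae_iff]
    convert hnull using 2
    ext x
    simp)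
  linarith

lemma exists_measure_inter_ne_zero {Ω : Type*} [MeasurableSpace Ω] {P : Measure Ω} {s : Set Ω}
    {p : ℕ → Ω → Prop} (hs : P s ≠ 0) (h : ∀ᵐ ω ∂P, ∃ n, p n ω) :
    ∃ n, P (s ∩ {ω | p n ω}) ≠ 0 := by
  have hfull : P (s ∩ ⋃ n, {ω | p n ω}) = P s :=
    measure_inter_conull (by rw [ae_iff] at h; convert h using 2; ext; simp)
  obtain ⟨n, hn⟩ := exists_measure_pos_of_not_measure_iUnion_null
    (s := fun n => s ∩ {ω | p n ω}) (by rwa [← Set.inter_iUnion, hfull])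
  exact ⟨n, hn.ne'⟩

lemma tsum_mul_measure_le_setLIntegral {Ω : Type*} [MeasurableSpace Ω] {P : Measure Ω}
    {K : ℕ → Set Ω} (hK : ∀ m, MeasurableSet (K m)) {τ : Ω → ℕ∞}
    (hτ : ∀ m, ∀ ω ∈ K m, τ ω = m + 1) :
    ∑' m : ℕ, ((m : ℝ≥0∞) + 1) * P (K m) ≤ ∫⁻ ω in {ω | τ ω < ⊤}, (τ ω : ℝ≥0∞) ∂P := by
  have hdisj : Pairwise (Function.onFun Disjoint K) := fun m m' hne =>
    Set.disjoint_left.2 fun ω h h' => hne (by simpa using (hτ m ω h).symm.trans (hτ m' ω h'))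
  calc ∑' m : ℕ, ((m : ℝ≥0∞) + 1) * P (K m) = ∑' m, ∫⁻ ω in K m, (τ ω : ℝ≥0∞) ∂P :=
        tsum_congr fun m => by
          rw [setLIntegral_congr_fun (hK m) (fun ω hω => by rw [hτ m ω hω]), setLIntegral_const]
          simp
    _ = ∫⁻ ω in ⋃ m, K m, (τ ω : ℝ≥0∞) ∂P := (lintegral_iUnion hK hdisj _).symm
    _ ≤ _ := lintegral_mono_set (Set.iUnion_subset fun m ω hω => by
          simp [hτ m ω hω, ENat.add_lt_top])

section RandomWalk

variable {Ω : Type*} {Y : ℕ → Ω → ℝ}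

def randomWalk (Y : ℕ → Ω → ℝ) (n : ℕ) (ω : Ω) : ℝ := ∑ i ∈ Finset.range n, Y i ω

abbrev stepSigma (Y : ℕ → Ω → ℝ) (s : Set ℕ) : MeasurableSpace Ω :=
  ⨆ i ∈ s, MeasurableSpace.comap (Y i) inferInstance

lemma randomWalk_succ (n : ℕ) (ω : Ω) : randomWalk Y (n + 1) ω = randomWalk Y n ω + Y n ω :=
  Finset.sum_range_succ _ _

lemma measurable_stepSigma {s : Set ℕ} {i : ℕ} (hi : i ∈ s) : Measurable[stepSigma Y s] (Y i) :=
  Measurable.of_comap_le (le_iSup₂ (f := fun i (_ : i ∈ s) => MeasurableSpace.comap (Y i) _) i hi)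

lemma measurable_randomWalk_stepSigma_Iio {n N : ℕ} (hn : n ≤ N) :
    Measurable[stepSigma Y (Set.Iio N)] (randomWalk Y n) :=
  Finset.measurable_sum _ fun i hi =>
    measurable_stepSigma (by rw [Finset.mem_range] at hi; exact Set.mem_Iio.2 (by omega))

variable [MeasurableSpace Ω] {P : Measure Ω} {ν : Measure ℝ}

lemma stepSigma_le (hmeas : ∀ i, Measurable (Y i)) (s : Set ℕ) :
    stepSigma Y s ≤ ‹MeasurableSpace Ω› :=
  iSup₂_le fun i _ => (hmeas i).comap_le

lemma indep_stepSigma_Iio_Ici (hmeas : ∀ i, Measurable (Y i)) (hindep : iIndepFun Y P) (N : ℕ) :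
    Indep (stepSigma Y (Set.Iio N)) (stepSigma Y (Set.Ici N)) P :=
  indep_iSup_of_disjoint (fun i => (hmeas i).comap_le) hindep.iIndep (Set.Iio_disjoint_Ici le_rfl)

lemma map_shift_eq_map (hmeas : ∀ i, Measurable (Y i))
    (hindep : iIndepFun Y P) (hlaw : ∀ i, P.map (Y i) = ν) (N : ℕ) :
    P.map (fun ω j => Y (N + j) ω) = P.map (fun ω j => Y j ω) := by
  rw [(hindep.precomp (add_right_injective N)).map_fun_eq_infinitePi_map (fun j => hmeas _),
    hindep.map_fun_eq_infinitePi_map hmeas]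
  simp only [hlaw]

lemma ae_tendsto_randomWalk_div (hmeas : ∀ i, Measurable (Y i))
    (hindep : iIndepFun Y P) (hlaw : ∀ i, P.map (Y i) = ν) (hint : Integrable id ν) :
    ∀ᵐ ω ∂P, Tendsto (fun n : ℕ => randomWalk Y n ω / n) atTop (𝓝 (∫ x, x ∂ν)) := by
  have hY₀ : HasLaw (Y 0) ν P := ⟨(hmeas 0).aemeasurable, hlaw 0⟩
  have hint₀ : Integrable (Y 0) P :=
    (integrable_map_measure (g := id) (by rw [hlaw 0]; exact hint.1) (hmeas 0).aemeasurable).1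
      (by rw [hlaw 0]; exact hint)
  have hslln := strong_law_ae_real Y hint₀ (fun i j hij => hindep.indepFun hij)
    (fun i => ⟨(hmeas i).aemeasurable, (hmeas 0).aemeasurable, by rw [hlaw, hlaw]⟩)
  rwa [hY₀.integral_eq] at hslln

/-- Choose `M` with `P(∀ n, S n ≤ M) ≠ 0`. The walk stays `≤ 0` forever as soon as its first
`N ≥ M / δ` steps are `≤ -δ` and the walk restarted at time `N` stays `≤ M`. These two events are
independent, and the second one has probability `P(∀ n, S n ≤ M)` because the shifted sequence of
steps has the same law. -/
theorem measure_forall_randomWalk_nonpos_ne_zero [IsProbabilityMeasure P]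
    (hmeas : ∀ i, Measurable (Y i)) (hindep : iIndepFun Y P) (hlaw : ∀ i, P.map (Y i) = ν)
    (hbdd : ∀ᵐ ω ∂P, ∃ M : ℕ, ∀ n, randomWalk Y n ω ≤ M) {δ : ℝ} (hδ : 0 < δ)
    (hνδ : ν (Set.Iic (-δ)) ≠ 0) :
    P {ω | ∀ n, randomWalk Y n ω ≤ 0} ≠ 0 := by
  obtain ⟨M, hM⟩ := exists_measure_inter_ne_zero (s := Set.univ) (by simp) hbdd
  rw [Set.univ_inter] at hM
  set N : ℕ := ⌈(M : ℝ) / δ⌉₊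
  have hN : (M : ℝ) ≤ N * δ := (div_le_iff₀ hδ).1 (Nat.le_ceil _)
  set W : Set (ℕ → ℝ) := {x | ∀ n, ∑ i ∈ Finset.range n, x i ≤ M}
  have hW : MeasurableSet W := by
    simp only [W, Set.ofPred_forall]
    exact MeasurableSet.iInter fun n => measurableSet_le
      (Finset.measurable_sum _ fun i _ => measurable_pi_apply i) measurable_const
  set E₁ : Set Ω := ⋂ i ∈ Finset.range N, Y i ⁻¹' Set.Iic (-δ)
  set E₂ : Set Ω := (fun ω j => Y (N + j) ω) ⁻¹' W
  have hE₁ : MeasurableSet[stepSigma Y (Set.Iio N)] E₁ :=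
    Finset.measurableSet_biInter _ fun i hi =>
      measurable_stepSigma (Set.mem_Iio.2 (Finset.mem_range.1 hi)) measurableSet_Iic
  have hE₂ : MeasurableSet[stepSigma Y (Set.Ici N)] E₂ :=
    (@measurable_pi_lambda _ _ _ (stepSigma Y (Set.Ici N)) _ _
      fun j => measurable_stepSigma (Set.mem_Ici.2 (Nat.le_add_right N j))) hW
  have hPE₁ : P E₁ ≠ 0 := by
    rw [iIndepFun_iff_measure_inter_preimage_eq_mul.1 hindep _ fun _ _ => measurableSet_Iic,
      Finset.prod_ne_zero_iff]
    intro i _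
    rwa [← Measure.map_apply (hmeas i) measurableSet_Iic, hlaw]
  have hPE₂ : P E₂ = P {ω | ∀ n, randomWalk Y n ω ≤ M} := by
    rw [← Measure.map_apply (measurable_pi_iff.2 fun j => hmeas _) hW,
      map_shift_eq_map hmeas hindep hlaw, Measure.map_apply (measurable_pi_iff.2 hmeas) hW]
    rfl
  have hsub : E₁ ∩ E₂ ⊆ {ω | ∀ n, randomWalk Y n ω ≤ 0} := fun ω ⟨h₁, h₂⟩ =>
    sum_range_nonpos_of_initial_drop hδ.le hN
      (fun i hi => Set.mem_iInter₂.1 h₁ i (Finset.mem_range.2 hi)) h₂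
  have hE₁E₂ : P (E₁ ∩ E₂) = P E₁ * P E₂ :=
    (Indep_iff _ _ P).1 (indep_stepSigma_Iio_Ici hmeas hindep N) _ _ hE₁ hE₂
  refine fun h0 => mul_ne_zero hPE₁ (hPE₂ ▸ hM) ?_
  rw [← hE₁E₂]
  exact measure_mono_null hsub h0

theorem exists_measure_forall_randomWalk_mem_band_ne_zero [IsProbabilityMeasure P]
    (hmeas : ∀ i, Measurable (Y i)) (hindep : iIndepFun Y P) (hlaw : ∀ i, P.map (Y i) = ν)
    (hint : Integrable id ν) (hneg : ∫ x, x ∂ν < 0) {c : ℝ} (hc : -∫ x, x ∂ν < c) :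
    ∃ A : ℕ, P {ω | ∀ n, randomWalk Y n ω ≤ 0 ∧ -randomWalk Y n ω ≤ c * n + A} ≠ 0 := by
  have hslln := ae_tendsto_randomWalk_div hmeas hindep hlaw hint
  have hbdd : ∀ᵐ ω ∂P, ∃ M : ℕ, ∀ n, randomWalk Y n ω ≤ M := hslln.mono fun ω h => by
    simpa using exists_forall_le_mul_add_of_tendsto_div h hneg
  have hlow : ∀ᵐ ω ∂P, ∃ A : ℕ, ∀ n, -randomWalk Y n ω ≤ c * n + A := hslln.mono fun ω h =>
    exists_forall_le_mul_add_of_tendsto_div (u := fun n => -randomWalk Y n ω)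
      (by simpa only [neg_div] using h.neg) hc
  obtain ⟨δ, hδ, hνδ⟩ := exists_measure_Iic_neg_ne_zero hneg
  obtain ⟨A, hA⟩ := exists_measure_inter_ne_zero
    (measure_forall_randomWalk_nonpos_ne_zero hmeas hindep hlaw hbdd hδ hνδ) hlow
  refine ⟨A, fun h => hA (measure_mono_null ?_ h)⟩
  exact fun ω ⟨h₁, h₂⟩ n => ⟨h₁ n, h₂ n⟩

/-- On the event that the walk stays in the band `[-(c n + A), b]` up to time `m` and then jumps
by more than `b + A + c m`, the first passage above `b` happens exactly at time `m + 1`; the jump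
is independent of the past. -/
theorem measure_mul_tsum_le_setLIntegral_firstPassage
    (hmeas : ∀ i, Measurable (Y i)) (hindep : iIndepFun Y P) (hlaw : ∀ i, P.map (Y i) = ν)
    {b c A : ℝ} {τ : Ω → ℕ∞}
    (hτ : ∀ ω, τ ω = ⨅ (n : ℕ) (_ : 1 ≤ n ∧ b < randomWalk Y n ω), (n : ℕ∞)) :
    P {ω | ∀ n, randomWalk Y n ω ≤ b ∧ -randomWalk Y n ω ≤ c * n + A}
        * ∑' m : ℕ, ((m : ℝ≥0∞) + 1) * ν (Set.Ioi (b + A + c * m))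
      ≤ ∫⁻ ω in {ω | τ ω < ⊤}, (τ ω : ℝ≥0∞) ∂P := by
  set band : ℕ → Set Ω :=
    fun m => {ω | ∀ n ≤ m, randomWalk Y n ω ≤ b ∧ -randomWalk Y n ω ≤ c * n + A}
  set K : ℕ → Set Ω := fun m => band m ∩ Y m ⁻¹' Set.Ioi (b + A + c * m)
  have hband : ∀ m, MeasurableSet[stepSigma Y (Set.Iio m)] (band m) := by
    intro m
    simp only [band, Set.ofPred_forall]
    refine MeasurableSet.iInter fun n => MeasurableSet.iInter fun hn => ?_
    have hS := measurable_randomWalk_stepSigma_Iio (Y := Y) hn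
    exact (measurableSet_le hS measurable_const).inter
      (measurableSet_le hS.neg measurable_const)
  have hK : ∀ m, P (K m) = P (band m) * ν (Set.Ioi (b + A + c * m)) := fun m => by
    rw [(Indep_iff _ _ P).1 (indep_stepSigma_Iio_Ici hmeas hindep m) _ _ (hband m)
      (measurable_stepSigma (Set.mem_Ici.2 le_rfl) measurableSet_Ioi),
      ← Measure.map_apply (hmeas m) measurableSet_Ioi, hlaw]
  have hKτ : ∀ m, ∀ ω ∈ K m, τ ω = m + 1 := by
    rintro m ω ⟨hω, hjump⟩
    refine (hτ ω).trans (iInf_firstPassage_eq (fun n hn => (hω n hn).1) ?_)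
    rw [randomWalk_succ]
    have := (hω m le_rfl).2
    rw [Set.mem_preimage, Set.mem_Ioi] at hjump
    linarith
  calc _ = ∑' m : ℕ, ((m : ℝ≥0∞) + 1) *
        (P {ω | ∀ n, randomWalk Y n ω ≤ b ∧ -randomWalk Y n ω ≤ c * n + A}
          * ν (Set.Ioi (b + A + c * m))) := by
        rw [← ENNReal.tsum_mul_left]
        exact tsum_congr fun m => by ring
    _ ≤ ∑' m : ℕ, ((m : ℝ≥0∞) + 1) * P (K m) := by
        refine ENNReal.tsum_le_tsum fun m => ?_
        rw [hK]
        gcongr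
        exact fun ω hω n _ => hω n
    _ ≤ _ := tsum_mul_measure_le_setLIntegral
        (fun m => (stepSigma_le hmeas _ _ (hband m)).inter (hmeas m measurableSet_Ioi)) hKτ

end RandomWalk

/-- If the increments are regularly varying with tail index `ι ∈ (1,2)` and have
negative mean, then the conditional expected first passage time given ruin is
infinite: `E[τ_b ; τ_b < ∞] = ∞`. -/
theorem stmt8 {Ω : Type*} [MeasurableSpace Ω] (P : Measure Ω) [IsProbabilityMeasure P]
    (ν : Measure ℝ) [IsProbabilityMeasure ν]
    (X : ℕ → Ω → ℝ) (hmeas : ∀ n, Measurable (X n))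
    (hindep : iIndepFun X P)
    (hlaw : ∀ n, Measure.map (X n) P = ν)
    (μ : ℝ) (hμ : μ < 0)
    (hint : Integrable id ν) (hmean : ∫ x, x ∂ν = μ)
    (ι : ℝ) (hι : ι ∈ Set.Ioo (1:ℝ) 2)
    (hpos : ∀ x : ℝ, 0 < (ν (Set.Ioi x)).toReal)
    (hRV : ∀ t > 0, Tendsto
      (fun x => (ν (Set.Ioi (t * x))).toReal / (ν (Set.Ioi x)).toReal)
      atTop (nhds (t ^ (-ι))))
    (b : ℝ) (hb : 0 < b)
    (S : ℕ → Ω → ℝ) (hS : ∀ n ω, S n ω = ∑ i ∈ Finset.range n, X (i + 1) ω)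
    (τ : Ω → ℕ∞) (hτ : ∀ ω, τ ω = ⨅ (n : ℕ) (_ : 1 ≤ n ∧ b < S n ω), (n : ℕ∞)) :
    ∫⁻ ω in {ω | τ ω < ⊤}, ((τ ω : ℕ∞) : ℝ≥0∞) ∂P = ⊤ := by
  set Y : ℕ → Ω → ℝ := fun i => X (i + 1)
  have hYmeas : ∀ i, Measurable (Y i) := fun i => hmeas _
  have hYindep : iIndepFun Y P := hindep.precomp (add_left_injective 1)
  have hYlaw : ∀ i, P.map (Y i) = ν := fun i => hlaw _
  obtain rfl : S = randomWalk Y := funext fun n => funext (hS n)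
  obtain ⟨A, hA⟩ := exists_measure_forall_randomWalk_mem_band_ne_zero hYmeas hYindep hYlaw hint
    (hmean ▸ hμ) (c := -(2 * μ)) (by linarith)
  have hdiv := tsum_add_one_mul_eq_top_of_le_four_mul
    (fun x y hxy => measure_mono (Set.Ioi_subset_Ioi hxy))
    (fun x => (ENNReal.toReal_pos_iff.1 (hpos x)).1.ne')
    (eventually_measure_Ioi_le_four_mul hpos hι.2 (hRV 2 two_pos)) (c := -(2 * μ)) (by linarith)
    (b + A)
  have hband : P {ω | ∀ n, randomWalk Y n ω ≤ b ∧ -randomWalk Y n ω ≤ -(2 * μ) * n + A} ≠ 0 := by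
    refine fun h => hA (measure_mono_null ?_ h)
    exact fun ω hω n => ⟨(hω n).1.trans hb.le, (hω n).2⟩
  refine top_unique (le_of_eq_of_le ?_ (measure_mul_tsum_le_setLIntegral_firstPassage
    (c := -(2 * μ)) (A := A) hYmeas hYindep hYlaw hτ))
  rw [hdiv, ENNReal.mul_top hband]
end

section
/- Fix θ > 0, |μ| > 0, and ι > 1, and let a(b) = G(b)/F̄(b) where F̄ is regularly varying with index ι and G is its integrated tail. Then for each t ≥ 0, Σ_{j=0}^{⌊t a(b)⌋} 2θ F̄(b + j|μ|)/G(b + j|μ|) → (2θ(ι−1)/|μ|) · log(1 + |μ| t/(ι−1)) as b → ∞. -/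
/-!
Karamata's theorem `G(x) ~ x F̄(x)/(ι-1)` follows by dominated convergence from
`G(x)/(x F̄(x)) = ∫₁^∞ F̄(ux)/F̄(x) du`, a Potter bound `F̄(ux) ≤ C u^β F̄(x)` (`β < -1`) serving
as dominating function. Hence `G` is regularly varying with index `1-ι`, and monotonicity
upgrades this to `G(c(x))/G(x) → L^(1-ι)` whenever `c(x)/x → L > 0`. With `m = |μ|`,
`G(x) - G(x+m)` lies between `m F̄(x+m)` and `m F̄(x)`, so each summand `F̄/G` is asymptotic to
`(log G(x) - log G(x+m))/m` and the sum is asymptotic to the telescoped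
`(log G(b) - log G(b + (N+1)m))/m`; as `(N+1)/b → t/(ι-1)` this tends to
`(ι-1) log(1 + m t/(ι-1))/m`.
-/

open MeasureTheory Real Filter Asymptotics Topology

def IsRegularlyVarying (f : ℝ → ℝ) (α : ℝ) : Prop :=
  ∀ s > 0, Tendsto (fun x => f (s * x) / f x) atTop (𝓝 (s ^ α))

noncomputable def integratedTail (f : ℝ → ℝ) (x : ℝ) : ℝ := ∫ s in Set.Ioi x, f s

section IntegratedTail

variable {f : ℝ → ℝ}

theorem mul_le_integratedTail_sub (hanti : Antitone f) {a b : ℝ}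
    (hInt : IntegrableOn f (Set.Ioi a)) (hab : a ≤ b) :
    (b - a) * f b ≤ integratedTail f a - integratedTail f b := by
  rw [integratedTail, integratedTail, intervalIntegral.integral_Ioi_sub_Ioi hInt hab, ← smul_eq_mul,
    ← intervalIntegral.integral_const]
  exact intervalIntegral.integral_mono_on hab intervalIntegrable_const hanti.intervalIntegrable
    fun x hx => hanti hx.2

theorem integratedTail_sub_le_mul (hanti : Antitone f) {a b : ℝ}
    (hInt : IntegrableOn f (Set.Ioi a)) (hab : a ≤ b) :
    integratedTail f a - integratedTail f b ≤ (b - a) * f a := by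
  rw [integratedTail, integratedTail, intervalIntegral.integral_Ioi_sub_Ioi hInt hab, ← smul_eq_mul,
    ← intervalIntegral.integral_const]
  exact intervalIntegral.integral_mono_on hab hanti.intervalIntegrable intervalIntegrable_const
    fun x hx => hanti hx.1

theorem integratedTail_pos (hpos : ∀ x, 0 < f x) (hanti : Antitone f)
    (hInt : ∀ x, IntegrableOn f (Set.Ioi x)) (x : ℝ) : 0 < integratedTail f x := by
  have hslab := mul_le_integratedTail_sub hanti (hInt x) (le_add_of_nonneg_right zero_le_one)
  have htail : 0 ≤ integratedTail f (x + 1) :=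
    setIntegral_nonneg measurableSet_Ioi fun y _ => (hpos y).le
  linarith [hpos (x + 1)]

theorem antitone_integratedTail (hnonneg : ∀ x, 0 ≤ f x)
    (hInt : ∀ x, IntegrableOn f (Set.Ioi x)) : Antitone (integratedTail f) := fun a _ hab =>
  setIntegral_mono_set (hInt a) (Eventually.of_forall fun y => hnonneg y)
    (Set.Ioi_subset_Ioi hab).eventuallyLE

end IntegratedTail

theorem tendsto_add_div_self_atTop (m : ℝ) : Tendsto (fun x : ℝ => (x + m) / x) atTop (𝓝 1) := by
  have h := (tendsto_const_nhds (x := (1 : ℝ))).add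
    ((tendsto_const_nhds (x := m)).div_atTop tendsto_id)
  rw [add_zero] at h
  refine h.congr' ?_
  filter_upwards [eventually_ne_atTop 0] with x hx
  simp only [id, add_div, div_self hx]

theorem Asymptotics.IsEquivalent.sum_comp {κ : Type*} {u v : ℝ → ℝ} (huv : u ~[atTop] v)
    (hv : ∀ x, 0 ≤ v x) (s : ℝ → Finset κ) {p : ℝ → κ → ℝ} (hp : ∀ b, ∀ j ∈ s b, b ≤ p b j) :
    (fun b => ∑ j ∈ s b, u (p b j)) ~[atTop] fun b => ∑ j ∈ s b, v (p b j) := by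
  refine IsLittleO.of_bound fun c hc => ?_
  obtain ⟨B, hB⟩ := eventually_atTop.1 (huv.isLittleO.bound hc)
  filter_upwards [eventually_ge_atTop B] with b hb
  rw [Pi.sub_apply, ← Finset.sum_sub_distrib,
    norm_of_nonneg (Finset.sum_nonneg fun j _ => hv _), Finset.mul_sum]
  refine (norm_sum_le _ _).trans (Finset.sum_le_sum fun j hj => ?_)
  simpa [norm_of_nonneg (hv _)] using hB _ (hb.trans (hp b j hj))

theorem tendsto_natFloor_add_one_div {y : ℝ → ℝ} {c : ℝ} (hy0 : ∀ b, 0 ≤ y b)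
    (hy : Tendsto (fun b => y b / b) atTop (𝓝 c)) :
    Tendsto (fun b => ((⌊y b⌋₊ + 1 : ℕ) : ℝ) / b) atTop (𝓝 c) := by
  have hupper : Tendsto (fun b => (y b + 1) / b) atTop (𝓝 c) := by
    simpa only [add_div, add_zero, id] using
      hy.add ((tendsto_const_nhds (x := (1 : ℝ))).div_atTop tendsto_id)
  refine tendsto_of_tendsto_of_tendsto_of_le_of_le' hy hupper ?_ ?_
  · filter_upwards [eventually_gt_atTop 0] with b hb
    gcongr
    push_cast
    exact (Nat.lt_floor_add_one _).le
  · filter_upwards [eventually_gt_atTop 0] with b hb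
    gcongr
    push_cast
    gcongr
    exact Nat.floor_le (hy0 b)

namespace IsRegularlyVarying

variable {f : ℝ → ℝ} {α : ℝ}

theorem eventually_le_rpow_mul (hf : IsRegularlyVarying f α) (hpos : ∀ x, 0 < f x)
    (hanti : Antitone f) {β : ℝ} (hαβ : α < β) (hβ : β ≤ 0) :
    ∀ᶠ x in atTop, ∀ u ≥ 1, f (u * x) ≤ 2 ^ (-β) * u ^ β * f x := by
  obtain ⟨B, hB⟩ := eventually_atTop.1 <|
    (hf 2 two_pos).eventually_lt_const (rpow_lt_rpow_of_exponent_lt one_lt_two hαβ)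
  have hiter : ∀ x ≥ max B 0, ∀ k : ℕ, f (2 ^ k * x) ≤ (2 ^ β) ^ k * f x := by
    intro x hx k
    have hx0 : 0 ≤ x := le_of_max_le_right hx
    induction k with
    | zero => simp
    | succ k ih =>
      have hxk : B ≤ 2 ^ k * x :=
        (le_of_max_le_left hx).trans (le_mul_of_one_le_left hx0 (one_le_pow₀ one_le_two))
      have hstep := (div_lt_iff₀ (hpos _)).1 (hB _ hxk)
      calc f (2 ^ (k + 1) * x) = f (2 * (2 ^ k * x)) := by ring_nf
        _ ≤ 2 ^ β * f (2 ^ k * x) := hstep.le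
        _ ≤ 2 ^ β * ((2 ^ β) ^ k * f x) := by gcongr
        _ = (2 ^ β) ^ (k + 1) * f x := by ring
  filter_upwards [eventually_ge_atTop (max B 0)] with x hx u hu
  obtain ⟨k, hk, hk'⟩ := exists_nat_pow_near hu one_lt_two
  have hu2 : u / 2 ≤ 2 ^ k := by rw [pow_succ] at hk'; linarith
  calc f (u * x) ≤ f (2 ^ k * x) := hanti (mul_le_mul_of_nonneg_right hk (le_of_max_le_right hx))
    _ ≤ (2 ^ β) ^ k * f x := hiter x hx k
    _ = ((2 : ℝ) ^ k) ^ β * f x := by rw [rpow_pow_comm zero_le_two]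
    _ ≤ (u / 2) ^ β * f x :=
      mul_le_mul_of_nonneg_right (rpow_le_rpow_of_nonpos (by linarith) hu2 hβ) (hpos x).le
    _ = 2 ^ (-β) * u ^ β * f x := by
      rw [div_rpow (by linarith) zero_le_two, rpow_neg zero_le_two]; ring

theorem tendsto_integratedTail_div (hf : IsRegularlyVarying f α) (hpos : ∀ x, 0 < f x)
    (hanti : Antitone f) (hα : α < -1) :
    Tendsto (fun x => integratedTail f x / (x * f x)) atTop (𝓝 (-(α + 1))⁻¹) := by
  obtain ⟨β, hαβ, hβ⟩ : ∃ β, α < β ∧ β < -1 := ⟨(α - 1) / 2, by linarith, by linarith⟩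
  have hcov : ∀ x > 0, integratedTail f x / (x * f x) = ∫ u in Set.Ioi 1, f (u * x) / f x := by
    intro x hx
    rw [integral_div, integratedTail, ← mul_one x, ← integral_comp_mul_left_Ioi' _ _ hx]
    simp_rw [mul_comm x, smul_eq_mul]
    field_simp [(hpos _).ne']
  have hintegral : ∫ u in Set.Ioi (1 : ℝ), u ^ α = (-(α + 1))⁻¹ := by
    rw [integral_Ioi_rpow_of_lt hα one_pos, one_rpow, neg_div, ← div_neg, one_div]
  rw [← hintegral]
  refine Tendsto.congr' (EventuallyEq.symm ?_) <|
    tendsto_integral_filter_of_dominated_convergence (F := fun x u => f (u * x) / f x)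
      (fun u => 2 ^ (-β) * u ^ β) ?_ ?_ ?_ ?_
  · filter_upwards [eventually_gt_atTop 0] with x hx using hcov x hx
  · exact Eventually.of_forall fun x =>
      ((hanti.measurable.comp (measurable_id.mul_const x)).div_const _).aestronglyMeasurable
  · filter_upwards [hf.eventually_le_rpow_mul hpos hanti hαβ (by linarith)] with x hx
    refine (ae_restrict_iff' measurableSet_Ioi).2 (Eventually.of_forall fun u hu => ?_)
    rw [Real.norm_of_nonneg (div_nonneg (hpos _).le (hpos _).le), div_le_iff₀ (hpos _)]
    exact hx u (le_of_lt hu)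
  · exact (integrableOn_Ioi_rpow_of_lt hβ one_pos).const_mul _
  · exact (ae_restrict_iff' measurableSet_Ioi).2 (Eventually.of_forall fun u hu => hf u
      (zero_lt_one.trans hu))

theorem tendsto_comp_div (hf : IsRegularlyVarying f α) (hnonneg : ∀ x, 0 ≤ f x)
    (hanti : Antitone f) {c : ℝ → ℝ} {L : ℝ} (hL : 0 < L)
    (hc : Tendsto (fun x => c x / x) atTop (𝓝 L)) :
    Tendsto (fun x => f (c x) / f x) atTop (𝓝 (L ^ α)) := by
  have hcont : Tendsto (fun l : ℝ => l ^ α) (𝓝 L) (𝓝 (L ^ α)) :=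
    (continuousAt_rpow_const _ _ (Or.inl hL.ne')).tendsto
  refine tendsto_order.2 ⟨fun r hr => ?_, fun r hr => ?_⟩
  · obtain ⟨l, hrl, hLl⟩ := ((hcont.mono_left nhdsWithin_le_nhds).eventually_const_lt hr |>.and
      (self_mem_nhdsWithin (s := Set.Ioi L))).exists
    filter_upwards [(hf l (hL.trans hLl)).eventually_const_lt hrl, hc.eventually_lt_const hLl,
      eventually_gt_atTop 0] with x hlx hcx hx
    refine hlx.trans_le (div_le_div_of_nonneg_right (hanti ?_) (hnonneg x))
    exact ((div_lt_iff₀ hx).1 hcx).le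
  · obtain ⟨l, ⟨hrl, hl⟩, hlL⟩ := ((hcont.eventually_lt_const hr).and (eventually_gt_nhds hL)
      |>.filter_mono nhdsWithin_le_nhds |>.and (self_mem_nhdsWithin (s := Set.Iio L))).exists
    filter_upwards [(hf l hl).eventually_lt_const hrl, hc.eventually_const_lt hlL,
      eventually_gt_atTop 0] with x hlx hcx hx
    refine (div_le_div_of_nonneg_right (hanti ?_) (hnonneg x)).trans_lt hlx
    exact ((lt_div_iff₀ hx).1 hcx).le

end IsRegularlyVarying

theorem isRegularlyVarying_integratedTail {f : ℝ → ℝ} {α : ℝ} (hf : IsRegularlyVarying f α)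
    (hpos : ∀ x, 0 < f x) (hanti : Antitone f) (hα : α < -1) :
    IsRegularlyVarying (integratedTail f) (α + 1) := by
  intro s hs
  have hK := hf.tendsto_integratedTail_div hpos hanti hα
  have hK0 : (-(α + 1))⁻¹ ≠ 0 := inv_ne_zero (by linarith)
  have hlim := ((hK.comp (tendsto_id.const_mul_atTop hs)).mul ((hf s hs).const_mul s)).div hK hK0
  rw [mul_div_cancel_left₀ _ hK0, ← rpow_one_add' hs.le (by linarith), add_comm] at hlim
  refine hlim.congr' ?_
  filter_upwards [eventually_gt_atTop 0] with x hx
  have := (hpos x).ne'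
  have := (hpos (s * x)).ne'
  simp only [Pi.div_apply, Function.comp_apply, id]
  field_simp

theorem IsRegularlyVarying.isEquivalent_log_sub {f : ℝ → ℝ} {α : ℝ}
    (hf : IsRegularlyVarying f α) (hpos : ∀ x, 0 < f x) (hanti : Antitone f)
    (hInt : ∀ x, IntegrableOn f (Set.Ioi x)) (hα : α < -1) {m : ℝ} (hm : 0 < m) :
    (fun x => f x / integratedTail f x) ~[atTop]
      fun x => (log (integratedTail f x) - log (integratedTail f (x + m))) / m := by
  set G := integratedTail f
  have hGpos : ∀ x, 0 < G x := integratedTail_pos hpos hanti hInt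
  have hf1 : Tendsto (fun x => f (x + m) / f x) atTop (𝓝 1) := by
    simpa using hf.tendsto_comp_div (fun x => (hpos x).le) hanti one_pos
      (tendsto_add_div_self_atTop m)
  have hG1 : Tendsto (fun x => G x / G (x + m)) atTop (𝓝 1) := by
    simpa using ((isRegularlyVarying_integratedTail hf hpos hanti hα).tendsto_comp_div
      (fun x => (hGpos x).le) (antitone_integratedTail (fun x => (hpos x).le) hInt) one_pos
      (tendsto_add_div_self_atTop m)).inv₀ (by simp)
  refine (isEquivalent_of_tendsto_one (tendsto_of_tendsto_of_tendsto_of_le_of_le hf1 hG1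
    (fun x => ?_) (fun x => ?_))).symm
  all_goals
    have hGx := hGpos x
    have hGxm := hGpos (x + m)
    have hfx := hpos x
    have hxm : x ≤ x + m := le_add_of_nonneg_right hm.le
    rw [Pi.div_apply, ← log_div hGx.ne' hGxm.ne']
  · have hslab := mul_le_integratedTail_sub hanti (hInt x) hxm
    have hlog := one_sub_inv_le_log_of_pos (div_pos hGx hGxm)
    rw [add_sub_cancel_left] at hslab
    rw [le_div_iff₀ (div_pos hfx hGx), le_div_iff₀ hm]
    calc f (x + m) / f x * (f x / G x) * m = m * f (x + m) / G x := by field_simp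
      _ ≤ (G x - G (x + m)) / G x := by gcongr
      _ = 1 - (G x / G (x + m))⁻¹ := by field_simp
      _ ≤ log (G x / G (x + m)) := hlog
  · have hslab := integratedTail_sub_le_mul hanti (hInt x) hxm
    have hlog := log_le_sub_one_of_pos (div_pos hGx hGxm)
    rw [add_sub_cancel_left] at hslab
    rw [div_le_iff₀ (div_pos hfx hGx), div_le_iff₀ hm]
    calc log (G x / G (x + m)) ≤ G x / G (x + m) - 1 := hlog
      _ = (G x - G (x + m)) / G (x + m) := by field_simp
      _ ≤ m * f x / G (x + m) := by gcongr
      _ = G x / G (x + m) * (f x / G x) * m := by field_simp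

theorem IsRegularlyVarying.tendsto_sum_div_integratedTail {f : ℝ → ℝ} {α : ℝ}
    (hf : IsRegularlyVarying f α) (hpos : ∀ x, 0 < f x) (hanti : Antitone f)
    (hInt : ∀ x, IntegrableOn f (Set.Ioi x)) (hα : α < -1) {m : ℝ} (hm : 0 < m)
    {n : ℝ → ℕ} {κ : ℝ} (hκ : 0 ≤ κ) (hn : Tendsto (fun b => (n b : ℝ) / b) atTop (𝓝 κ)) :
    Tendsto (fun b => ∑ j ∈ Finset.range (n b), f (b + j * m) / integratedTail f (b + j * m))
      atTop (𝓝 (-(α + 1) / m * log (1 + m * κ))) := by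
  set G := integratedTail f
  have hGpos : ∀ x, 0 < G x := integratedTail_pos hpos hanti hInt
  have hGanti : Antitone G := antitone_integratedTail (fun x => (hpos x).le) hInt
  have hend : Tendsto (fun b => (b + n b * m) / b) atTop (𝓝 (1 + m * κ)) := by
    refine (tendsto_const_nhds.add (hn.const_mul m)).congr' ?_
    filter_upwards [eventually_ne_atTop 0] with b hb
    field_simp
  have hratio := (isRegularlyVarying_integratedTail hf hpos hanti hα).tendsto_comp_div
    (fun x => (hGpos x).le) hGanti (by positivity) hend
  have hlog : Tendsto (fun b => (log (G b) - log (G (b + n b * m))) / m) atTop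
      (𝓝 (-(α + 1) / m * log (1 + m * κ))) := by
    have := ((hratio.log (by positivity)).neg.div_const m)
    rw [log_rpow (by positivity)] at this
    convert this using 2 with b
    · rw [log_div (hGpos _).ne' (hGpos _).ne']; ring
    · ring
  have htelescope : ∀ b,
      ∑ j ∈ Finset.range (n b), (log (G (b + j * m)) - log (G (b + j * m + m))) / m
        = (log (G b) - log (G (b + n b * m))) / m := by
    intro b
    have hstep : ∀ j : ℕ, b + j * m + m = b + ((j + 1 : ℕ) : ℝ) * m := fun j => by push_cast; ring
    simp only [hstep]
    rw [← Finset.sum_div, Finset.sum_range_sub' (fun j : ℕ => log (G (b + j * m)))]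
    simp
  have hsum := (hf.isEquivalent_log_sub hpos hanti hInt hα hm).sum_comp
    (fun x => div_nonneg (sub_nonneg.2 (log_le_log (hGpos _) (hGanti (by linarith)))) hm.le)
    (fun b => Finset.range (n b)) (p := fun b j => b + j * m)
    (fun b j _ => le_add_of_nonneg_right (by positivity))
  exact hsum.symm.tendsto_nhds (hlog.congr fun b => (htelescope b).symm)

theorem stmt18_general (Fbar : ℝ → ℝ) (ι θ μr t : ℝ) (hι : 1 < ι)
    (hμ : μr ≠ 0) (ht : 0 ≤ t)
    (hpos : ∀ x, 0 < Fbar x) (hanti : Antitone Fbar)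
    (hInt : ∀ b : ℝ, IntegrableOn Fbar (Set.Ioi b))
    (hRV : ∀ s > 0, Tendsto (fun x => Fbar (s * x) / Fbar x) atTop
      (nhds (s ^ (-ι)))) :
    Tendsto (fun b =>
        ∑ j ∈ Finset.range (⌊t * ((∫ s in Set.Ioi b, Fbar s) / Fbar b)⌋₊ + 1),
          2 * θ * Fbar (b + (j : ℝ) * |μr|) /
            (∫ s in Set.Ioi (b + (j : ℝ) * |μr|), Fbar s))
      atTop (nhds ((2 * θ * (ι - 1) / |μr|) * Real.log (1 + |μr| * t / (ι - 1)))) := by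
  have hα : -ι < -1 := by linarith
  replace hRV : IsRegularlyVarying Fbar (-ι) := hRV
  have hkar := (hRV.tendsto_integratedTail_div hpos hanti hα).const_mul t
  have hn := tendsto_natFloor_add_one_div (y := fun b => t * (integratedTail Fbar b / Fbar b))
    (fun b => mul_nonneg ht (div_nonneg (integratedTail_pos hpos hanti hInt b).le (hpos b).le))
    (by simpa only [mul_div_assoc, div_div, mul_comm (Fbar _)] using hkar)
  have hlim := (hRV.tendsto_sum_div_integratedTail hpos hanti hInt hα (abs_pos.2 hμ)
    (mul_nonneg ht (inv_nonneg.2 (by linarith))) hn).const_mul (2 * θ)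
  convert hlim using 2 with b
  · simp only [Finset.mul_sum, mul_div_assoc, integratedTail]
  · ring_nf

/-- Riemann-sum limit for the coupling time (regularly varying case): with
`a(b) = G(b)/F̄(b)`,
`Σ_{j=0}^{⌊t a(b)⌋} 2θ F̄(b+j|μ|)/G(b+j|μ|) → (2θ(ι-1)/|μ|) log(1+|μ|t/(ι-1))`. -/
theorem stmt18 (Fbar : ℝ → ℝ) (ι θ μr t : ℝ) (hι : 1 < ι) (hθ : 0 < θ)
    (hμ : μr ≠ 0) (ht : 0 ≤ t)
    (hpos : ∀ x, 0 < Fbar x) (hanti : Antitone Fbar)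
    (hInt : ∀ b : ℝ, IntegrableOn Fbar (Set.Ioi b))
    (hRV : ∀ s > 0, Tendsto (fun x => Fbar (s * x) / Fbar x) atTop
      (nhds (s ^ (-ι)))) :
    Tendsto (fun b =>
        ∑ j ∈ Finset.range (⌊t * ((∫ s in Set.Ioi b, Fbar s) / Fbar b)⌋₊ + 1),
          2 * θ * Fbar (b + (j : ℝ) * |μr|) /
            (∫ s in Set.Ioi (b + (j : ℝ) * |μr|), Fbar s))
      atTop (nhds ((2 * θ * (ι - 1) / |μr|) * Real.log (1 + |μr| * t / (ι - 1)))) :=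
  stmt18_general Fbar ι θ μr t hι hμ ht hpos hanti hInt hRV
end

section
/- Suppose the hazard rate λ of X satisfies: λ is eventually nonincreasing, x λ(x) → ∞, and P(X > x + t/λ(x) | X > x) → e^{-t} as x → ∞ uniformly on compact sets of t ≥ 0, with the domination P(X > x + t/λ(x) | X > x) ≤ t^{-α} for some α > 1 and all t, x > b₀. Then a(x) := G(x)/F̄(x) satisfies a(x) λ(x) → 1 as x → ∞, where G(x) = ∫_x^∞ F̄(s) ds. -/
/-!
Substituting `s = x + t / λ(x)` gives
`a(x) λ(x) = ∫_0^∞ F̄(x + t/λ(x)) / F̄(x) dt`. The integrand tends to `e^{-t}` pointwise and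
is dominated by `1` for `t ≤ b₀` (monotonicity of `F̄`) and by the integrable `t^{-α}` beyond, so
dominated convergence gives the limit `∫_0^∞ e^{-t} dt = 1`.
-/

open MeasureTheory Real Filter Set Topology

theorem integral_Ioi_comp_add_div {E : Type*} [NormedAddCommGroup E] [NormedSpace ℝ E]
    (f : ℝ → E) (x : ℝ) {c : ℝ} (hc : 0 < c) :
    ∫ t in Ioi 0, f (x + t / c) = c • ∫ s in Ioi x, f s := by
  have hshift : ∫ u in Ioi 0, f (x + u) = ∫ s in Ioi x, f s := by
    simpa [preimage_const_add_Ioi] using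
      (measurePreserving_add_left volume x).setIntegral_preimage_emb
        (measurableEmbedding_addLeft x) f (Ioi x)
  simp_rw [div_eq_inv_mul]
  rw [integral_comp_mul_left_Ioi (fun u => f (x + u)) 0 (inv_pos.2 hc), mul_zero, inv_inv, hshift]

theorem integrableOn_Ioi_ite_one_rpow_neg {b α : ℝ} (hb : 0 < b) (hα : 1 < α) :
    IntegrableOn (fun t : ℝ => if t ≤ b then 1 else t ^ (-α)) (Ioi 0) := by
  rw [← Ioc_union_Ioi_eq_Ioi hb.le]
  refine IntegrableOn.union ?_ ?_
  · exact (integrableOn_const measure_Ioc_lt_top.ne).congr_fun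
      (fun t ht => (if_pos ht.2).symm) measurableSet_Ioc
  · exact (integrableOn_Ioi_rpow_of_lt (by linarith) hb).congr_fun
      (fun t ht => (if_neg (not_le.2 ht)).symm) measurableSet_Ioi

theorem tendsto_integral_Ioi_tail_ratio {F lam : ℝ → ℝ} {b α : ℝ}
    (hF : Antitone F) (hF0 : ∀ x, 0 ≤ F x) (hb : 0 < b) (hα : 1 < α)
    (hlam : ∀ᶠ x in atTop, 0 ≤ lam x)
    (hlim : ∀ t > 0, Tendsto (fun x => F (x + t / lam x) / F x) atTop (𝓝 (exp (-t))))
    (hdom : ∀ᶠ x in atTop, ∀ t > b, F (x + t / lam x) / F x ≤ t ^ (-α)) :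
    Tendsto (fun x => ∫ t in Ioi 0, F (x + t / lam x) / F x) atTop (𝓝 1) := by
  rw [← integral_exp_neg_Ioi_zero]
  refine tendsto_integral_filter_of_dominated_convergence _ ?_ ?_
    (integrableOn_Ioi_ite_one_rpow_neg hb hα) ?_
  · refine Eventually.of_forall fun x => ?_
    exact ((hF.measurable.comp (measurable_const.add (measurable_id.div_const _))).div_const
      _).aestronglyMeasurable
  · filter_upwards [hlam, hdom] with x hlx hdx
    refine (ae_restrict_iff' measurableSet_Ioi).2 (ae_of_all _ fun t (ht : 0 < t) => ?_)
    rw [Real.norm_of_nonneg (div_nonneg (hF0 _) (hF0 _))]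
    split_ifs with htb
    · exact div_le_one_of_le₀ (hF (le_add_of_nonneg_right (div_nonneg ht.le hlx))) (hF0 x)
    · exact hdx t (not_le.1 htb)
  · exact (ae_restrict_iff' measurableSet_Ioi).2 (ae_of_all _ hlim)

theorem stmt19_general (ν : Measure ℝ) [IsProbabilityMeasure ν] (b₀ α : ℝ)
    (hb₀ : 0 < b₀) (hα : 1 < α)
    (lam : ℝ → ℝ) (hlampos : ∀ x ≥ b₀, 0 < lam x)
    (hB4 : ∀ T > 0, TendstoUniformlyOn
        (fun x t => (ν (Set.Ioi (x + t / lam x))).toReal / (ν (Set.Ioi x)).toReal)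
        (fun t => Real.exp (-t)) atTop (Set.Icc 0 T))
    (hdom : ∀ t x, b₀ < t → b₀ < x →
        (ν (Set.Ioi (x + t / lam x))).toReal / (ν (Set.Ioi x)).toReal ≤ t ^ (-α)) :
    Tendsto (fun x =>
        ((∫ s in Set.Ioi x, (ν (Set.Ioi s)).toReal) / (ν (Set.Ioi x)).toReal)
          * lam x)
      atTop (nhds 1) := by
  have hlam : ∀ᶠ x in atTop, 0 < lam x :=
    (eventually_ge_atTop b₀).mono hlampos
  have hratio := tendsto_integral_Ioi_tail_ratio (F := fun s => (ν (Ioi s)).toReal)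
    (fun _ _ h => measureReal_mono (Ioi_subset_Ioi h)) (fun _ => ENNReal.toReal_nonneg) hb₀ hα
    (hlam.mono fun _ h => h.le) (fun t ht => (hB4 t ht).tendsto_at ⟨ht.le, le_rfl⟩)
    ((eventually_gt_atTop b₀).mono fun x hx t ht => hdom t x ht hx)
  refine hratio.congr' ?_
  filter_upwards [hlam] with x hx
  rw [integral_div, integral_Ioi_comp_add_div (fun s => (ν (Ioi s)).toReal) x hx, smul_eq_mul,
    mul_comm, mul_div_right_comm]

/-- Under Assumptions B1, B3, B4 the mean residual life satisfies
`a(x) λ(x) → 1`, where `a(x) = G(x)/F̄(x)` and `λ` is the hazard rate. -/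
theorem stmt19 (ν : Measure ℝ) [IsProbabilityMeasure ν] (b₀ α : ℝ)
    (hb₀ : 0 < b₀) (hα : 1 < α)
    (lam : ℝ → ℝ) (hlampos : ∀ x ≥ b₀, 0 < lam x)
    (hpos : ∀ x, 0 < (ν (Set.Ioi x)).toReal)
    (hhaz : ∀ x ≥ b₀,
      HasDerivAt (fun y => -Real.log ((ν (Set.Ioi y)).toReal)) (lam x) x)
    (hB3 : AntitoneOn lam (Set.Ici b₀))
    (hB1 : Tendsto (fun x => x * lam x) atTop atTop)
    (hB4 : ∀ T > 0, TendstoUniformlyOn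
        (fun x t => (ν (Set.Ioi (x + t / lam x))).toReal / (ν (Set.Ioi x)).toReal)
        (fun t => Real.exp (-t)) atTop (Set.Icc 0 T))
    (hdom : ∀ t x, b₀ < t → b₀ < x →
        (ν (Set.Ioi (x + t / lam x))).toReal / (ν (Set.Ioi x)).toReal ≤ t ^ (-α))
    (hInt : ∀ b : ℝ,
      IntegrableOn (fun s => (ν (Set.Ioi s)).toReal) (Set.Ioi b)) :
    Tendsto (fun x =>
        ((∫ s in Set.Ioi x, (ν (Set.Ioi s)).toReal) / (ν (Set.Ioi x)).toReal)
          * lam x)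
      atTop (nhds 1) :=
  stmt19_general ν b₀ α hb₀ hα lam hlampos hB4 hdom
end
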